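/- Let K be a nonempty set of control parameters, Pr : K → ℝ a reachability-probability function, and ε > 0. Suppose K is covered by finitely many nonempty subsets (boxes) B₁, …, B_N, and for each i there is a probability enclosure, i.e., real numbers aᵢ ≤ bᵢ with bᵢ − aᵢ ≤ ε such that aᵢ ≤ Pr(k) ≤ bᵢ for every k ∈ Bᵢ. Let mᵢ = (aᵢ + bᵢ)/2 denote the midpoint of the i-th enclosure, let i* be an index attaining the least midpoint (mᵢ* ≤ mᵢ for all i), and let k* be any element of Bᵢ*. Let P* = inf_{k ∈ K} Pr(k). Then Pr(k*) < P* + (3/2)·ε. -/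
import Mathlib


/-- Proposition 1: if the parameter space `K` is covered by finitely many nonempty
boxes `B i`, each with a probability enclosure `[a i, b i]` of length at most `ε`
containing `Pr k` for every `k ∈ B i`, and `k*` is chosen from the box whose
enclosure has the least midpoint, then `Pr k* < P* + (3/2)ε` where
`P* = inf_{k ∈ K} Pr k`. -/
theorem pid_formal_synthesis_midpoint_bound
    {α : Type*} (K : Set α) (hK : K.Nonempty) (Pr : α → ℝ) (ε : ℝ) (hε : 0 < ε)
    (N : ℕ) (B : Fin N → Set α) (a b : Fin N → ℝ)
    (hBsub : ∀ i, B i ⊆ K) (hBne : ∀ i, (B i).Nonempty)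
    (hcover : K ⊆ ⋃ i, B i)
    (hab : ∀ i, a i ≤ b i) (hlen : ∀ i, b i - a i ≤ ε)
    (hencl : ∀ i, ∀ k ∈ B i, a i ≤ Pr k ∧ Pr k ≤ b i)
    (m : Fin N → ℝ) (hm : ∀ i, m i = (a i + b i) / 2)
    (istar : Fin N) (hmin : ∀ i, m istar ≤ m i)
    (kstar : α) (hks : kstar ∈ B istar) :
    Pr kstar < sInf (Pr '' K) + 3 / 2 * ε := by
  have hlb : m istar - ε / 2 ≤ sInf (Pr '' K) := by
    apply le_csInf (hK.image Pr)
    rintro _ ⟨k, hk, rfl⟩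
    obtain ⟨i, hi⟩ := Set.mem_iUnion.mp (hcover hk)
    have h1 : a i ≤ Pr k := (hencl i k hi).1
    have h2 : m i - ε / 2 ≤ a i := by
      have := hlen i; rw [hm i]; linarith
    have := hmin i
    linarith
  have hub : Pr kstar ≤ m istar + ε / 2 := by
    have h1 : Pr kstar ≤ b istar := (hencl istar kstar hks).2
    have := hlen istar; have := hab istar
    rw [hm istar]; linarith
  linarith
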